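/- arXiv:2004.00766 — 2 statements merged into one kernel-verified Lean document; each statement's English description precedes it below -/
import Mathlib

section
/- Let β̃, γ ∈ ℝ with γ ≠ 0, set λ = (β̃ + γ)/γ and Γ = max(exp(|γ|), exp(|β̃ + γ|)), and suppose |λ| = 1. Then for each x ∈ {0, 1} there exist u, u′ ∈ [0,1] such that exp((β̃x + γ)(u − u′)) = Γ, and for all u, u′ ∈ [0,1] one has Γ^{−1} ≤ exp((β̃x + γ)(u − u′)) ≤ Γ. -/
/-!
Since `|λ| = |β̃ + γ| / |γ|`, the hypothesis `|λ| = 1` says `|β̃ + γ| = |γ|`, so for either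
value of `x` the log-odds slope `c = β̃ x + γ` satisfies `Γ = exp |c|`. For `u, u' ∈ [0,1]` we
have `|c (u - u')| ≤ |c|`, with equality at `(u, u') = (1, 0)` or `(0, 1)` according to the
sign of `c`; exponentiating gives both the bounds and their sharpness.
-/

open Real Set

lemma abs_add_eq_abs_of_abs_add_div_eq_one {b γ : ℝ} (h : |(b + γ) / γ| = 1) :
    |b + γ| = |γ| :=
  eq_of_div_eq_one (by rwa [← abs_div])

lemma abs_mul_sub_le_abs {c u u' : ℝ} (hu : u ∈ Icc (0 : ℝ) 1) (hu' : u' ∈ Icc (0 : ℝ) 1) :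
    |c * (u - u')| ≤ |c| := by
  rw [abs_mul]
  exact mul_le_of_le_one_right (abs_nonneg c)
    (abs_sub_le_of_nonneg_of_le hu.1 hu.2 hu'.1 hu'.2)

lemma exists_mem_Icc_exp_mul_sub_eq_exp_abs (c : ℝ) :
    ∃ u ∈ Icc (0 : ℝ) 1, ∃ u' ∈ Icc (0 : ℝ) 1, exp (c * (u - u')) = exp |c| := by
  rcases le_or_gt 0 c with hc | hc
  · exact ⟨1, by norm_num, 0, by norm_num, by rw [abs_of_nonneg hc]; norm_num⟩
  · exact ⟨0, by norm_num, 1, by norm_num, by rw [abs_of_neg hc]; norm_num⟩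

lemma exp_mul_sub_mem_Icc_exp_abs {c u u' : ℝ} (hu : u ∈ Icc (0 : ℝ) 1)
    (hu' : u' ∈ Icc (0 : ℝ) 1) :
    (exp |c|)⁻¹ ≤ exp (c * (u - u')) ∧ exp (c * (u - u')) ≤ exp |c| := by
  obtain ⟨hlower, hupper⟩ := abs_le.1 (abs_mul_sub_le_abs (c := c) hu hu')
  rw [← exp_neg]
  exact ⟨exp_le_exp.2 hlower, exp_le_exp.2 hupper⟩

theorem stmt11_general (btil γ : ℝ) (lam Γ : ℝ)
    (hlam : lam = (btil + γ) / γ)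
    (hΓ : Γ = max (Real.exp |γ|) (Real.exp |btil + γ|))
    (habs : |lam| = 1) :
    ∀ x ∈ ({0, 1} : Set ℝ),
      (∃ u ∈ Set.Icc (0:ℝ) 1, ∃ u' ∈ Set.Icc (0:ℝ) 1,
        Real.exp ((btil * x + γ) * (u - u')) = Γ) ∧
      ∀ u ∈ Set.Icc (0:ℝ) 1, ∀ u' ∈ Set.Icc (0:ℝ) 1,
        Γ⁻¹ ≤ Real.exp ((btil * x + γ) * (u - u')) ∧
        Real.exp ((btil * x + γ) * (u - u')) ≤ Γ := by
  have hequal : |btil + γ| = |γ| := abs_add_eq_abs_of_abs_add_div_eq_one (hlam ▸ habs)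
  intro x hx
  have hslope : |btil * x + γ| = |γ| := by
    rcases hx with rfl | rfl
    · simp
    · simpa using hequal
  have hΓx : Γ = exp |btil * x + γ| := by rw [hΓ, hequal, max_self, hslope]
  rw [hΓx]
  exact ⟨exists_mem_Icc_exp_mul_sub_eq_exp_abs _,
    fun u hu u' hu' => exp_mul_sub_mem_Icc_exp_abs hu hu'⟩

/-- Corollary 1, case 1: with `λ = (β̃ + γ)/γ` and
`Γ = max (exp |γ|) (exp |β̃ + γ|)`, if `|λ| = 1` then for each binary covariate value
`x ∈ {0, 1}` there exist `u, u' ∈ [0,1]` with `exp ((β̃ x + γ)(u - u')) = Γ`, and for all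
`u, u' ∈ [0,1]`, `Γ⁻¹ ≤ exp ((β̃ x + γ)(u - u')) ≤ Γ`. -/
theorem stmt11 (btil γ : ℝ) (hγ : γ ≠ 0) (lam Γ : ℝ)
    (hlam : lam = (btil + γ) / γ)
    (hΓ : Γ = max (Real.exp |γ|) (Real.exp |btil + γ|))
    (habs : |lam| = 1) :
    ∀ x ∈ ({0, 1} : Set ℝ),
      (∃ u ∈ Set.Icc (0:ℝ) 1, ∃ u' ∈ Set.Icc (0:ℝ) 1,
        Real.exp ((btil * x + γ) * (u - u')) = Γ) ∧
      ∀ u ∈ Set.Icc (0:ℝ) 1, ∀ u' ∈ Set.Icc (0:ℝ) 1,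
        Γ⁻¹ ≤ Real.exp ((btil * x + γ) * (u - u')) ∧
        Real.exp ((btil * x + γ) * (u - u')) ≤ Γ :=
  stmt11_general btil γ lam Γ hlam hΓ habs
end

section
/- Let n ≥ 1 and t ∈ ℝ. For each i ∈ {1,…,n}, let c_{i1}, c_{i2} ∈ {0,1}, d_i ≥ 0, θ_i ∈ ℝ, and u_{i1}, u_{i2} ∈ [0,1], and let Γ > 1 satisfy exp(|θ_i|) ≤ Γ for all i. Define p_i = (c_{i1}·exp(θ_i(u_{i1} − u_{i2})) + c_{i2}) / (1 + exp(θ_i(u_{i1} − u_{i2}))); define p̃_i = 0 if c_{i1} = c_{i2} = 0, p̃_i = 1 if c_{i1} = c_{i2} = 1, and p̃_i = exp(|θ_i|)/(1 + exp(|θ_i|)) if c_{i1} ≠ c_{i2}; and define p̄_i = 0 if c_{i1} = c_{i2} = 0, p̄_i = 1 if c_{i1} = c_{i2} = 1, and p̄_i = Γ/(1 + Γ) if c_{i1} ≠ c_{i2}. Let F_{d,t}(p) = Σ_{S ⊆ {1,…,n} : Σ_{i∈S} d_i ≥ t} (Π_{i∈S} p_i)(Π_{i∉S} (1 − p_i)).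 Then F_{d,t}(p) ≤ F_{d,t}(p̃) ≤ F_{d,t}(p̄), and there exists a choice of u_{i1}, u_{i2} ∈ [0,1] (for i = 1,…,n) achieving F_{d,t}(p) = F_{d,t}(p̃). -/
/-!
Each `F_{d,t}` is the probability of an upward-closed event of independent Bernoulli variables,
hence monotone in every success probability; so it suffices to compare the pairs one at a time.
For a discordant pair the contribution probability is `sigmoid (±θ (u₁ - u₂))`, which is at most
`sigmoid |θ| = p̃` because `|u₁ - u₂| ≤ 1`, with equality for `u₁ - u₂ = ±1` chosen by the sign
of `θ`; and `sigmoid |θ| ≤ Γ / (1 + Γ)` is `exp |θ| ≤ Γ`.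
-/

open Finset

/-- The tail function `F_{d,t}(p)`: the probability that `∑ i, d i * B i ≥ t` for independent
Bernoulli variables `B i` with success probabilities `p i`, written as an explicit sum over
subsets `S ⊆ {1,…,n}`. -/
noncomputable def tailF {n : ℕ} (d : Fin n → ℝ) (t : ℝ) (p : Fin n → ℝ) : ℝ :=
  ∑ S ∈ Finset.univ.filter (fun S : Finset (Fin n) => t ≤ ∑ i ∈ S, d i),
    (∏ i ∈ S, p i) * ∏ i ∈ Sᶜ, (1 - p i)

/-- The sharper worst-case contribution probability `p̃ᵢ`: `0` if `c₁ = c₂ = 0`, `1` if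
`c₁ = c₂ = 1`, and `exp |θ| / (1 + exp |θ|)` if `c₁ ≠ c₂`. -/
noncomputable def ptilde (c₁ c₂ θ : ℝ) : ℝ :=
  if c₁ = 0 ∧ c₂ = 0 then 0
  else if c₁ = 1 ∧ c₂ = 1 then 1
  else Real.exp |θ| / (1 + Real.exp |θ|)

/-- The Rosenbaum worst-case contribution probability `p̄ᵢ`: `0` if `c₁ = c₂ = 0`, `1` if
`c₁ = c₂ = 1`, and `Γ / (1 + Γ)` if `c₁ ≠ c₂`. -/
noncomputable def pbar (c₁ c₂ Γ : ℝ) : ℝ :=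
  if c₁ = 0 ∧ c₂ = 0 then 0
  else if c₁ = 1 ∧ c₂ = 1 then 1
  else Γ / (1 + Γ)

open Real

section EventProb

variable {ι : Type*} [Fintype ι] [DecidableEq ι] (P : Finset ι → Prop) [DecidablePred P]

noncomputable def eventProb (p : ι → ℝ) : ℝ :=
  ∑ S ∈ univ.filter P, (∏ i ∈ S, p i) * ∏ i ∈ Sᶜ, (1 - p i)

lemma eventProb_eq_sum_powerset_erase (p : ι → ℝ) (i : ι) :
    eventProb P p = ∑ S ∈ (univ.erase i).powerset,
      ((∏ j ∈ S, p j) * ∏ j ∈ Sᶜ.erase i, (1 - p j)) *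
        ((if P (insert i S) then p i else 0) + (if P S then 1 - p i else 0)) := by
  rw [eventProb, sum_filter, ← powerset_univ, ← insert_erase (mem_univ i),
    sum_powerset_insert (notMem_erase i univ), insert_erase (mem_univ i), ← sum_add_distrib]
  refine sum_congr rfl fun S hS => ?_
  have hiS : i ∉ S := fun h => notMem_erase i univ (mem_powerset.mp hS h)
  rw [prod_insert hiS, compl_insert, ← mul_prod_erase Sᶜ _ (mem_compl.mpr hiS)]
  split_ifs <;> ring

variable {P}

lemma eventProb_le_update (hP : Monotone P) {p : ι → ℝ} (hp₀ : 0 ≤ p) (hp₁ : p ≤ 1)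
    {i : ι} {x : ℝ} (hpx : p i ≤ x) :
    eventProb P p ≤ eventProb P (Function.update p i x) := by
  rw [eventProb_eq_sum_powerset_erase P p i, eventProb_eq_sum_powerset_erase P _ i]
  refine sum_le_sum fun S hS => ?_
  have hiS : i ∉ S := fun h => notMem_erase i univ (mem_powerset.mp hS h)
  have hS_eq : ∏ j ∈ S, Function.update p i x j = ∏ j ∈ S, p j :=
    prod_congr rfl fun j hj => Function.update_of_ne (ne_of_mem_of_not_mem hj hiS) _ _
  have hSc_eq : ∏ j ∈ Sᶜ.erase i, (1 - Function.update p i x j) = ∏ j ∈ Sᶜ.erase i, (1 - p j) :=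
    prod_congr rfl fun j hj => by rw [Function.update_of_ne (ne_of_mem_erase hj)]
  rw [hS_eq, hSc_eq, Function.update_self]
  have hweight : 0 ≤ (∏ j ∈ S, p j) * ∏ j ∈ Sᶜ.erase i, (1 - p j) :=
    mul_nonneg (prod_nonneg fun j _ => hp₀ j) (prod_nonneg fun j _ => sub_nonneg.mpr (hp₁ j))
  refine mul_le_mul_of_nonneg_left ?_ hweight
  -- the summand is affine in the `i`-th probability, with slope `[P (insert i S)] - [P S] ≥ 0`
  have hinsert : P S → P (insert i S) := hP (subset_insert i S)
  split_ifs with h₁ h₂ h₂ <;> first | linarith | exact absurd (hinsert h₂) h₁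

lemma eventProb_mono (hP : Monotone P) {p q : ι → ℝ} (hp₀ : 0 ≤ p) (hpq : p ≤ q) (hq₁ : q ≤ 1) :
    eventProb P p ≤ eventProb P q := by
  have key (s : Finset ι) : eventProb P p ≤ eventProb P (s.piecewise q p) := by
    induction s using Finset.induction_on with
    | empty => rw [piecewise_empty]
    | insert j s hj ih =>
      rw [piecewise_insert]
      refine ih.trans (eventProb_le_update hP ?_ ?_ ?_)
      · exact le_piecewise_of_le_of_le _ (hp₀.trans hpq) hp₀
      · exact piecewise_le_of_le_of_le _ hq₁ (hpq.trans hq₁)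
      · rw [piecewise_eq_of_notMem _ _ _ hj]
        exact hpq j
  simpa using key univ

end EventProb

lemma monotone_le_sum {ι : Type*} {d : ι → ℝ} (hd : 0 ≤ d) (t : ℝ) :
    Monotone fun S : Finset ι => t ≤ ∑ i ∈ S, d i :=
  fun _ _ hST h => h.trans (sum_le_sum_of_subset_of_nonneg hST fun i _ _ => hd i)

lemma tailF_mono {n : ℕ} {d : Fin n → ℝ} (hd : 0 ≤ d) (t : ℝ) {p q : Fin n → ℝ}
    (hp₀ : 0 ≤ p) (hpq : p ≤ q) (hq₁ : q ≤ 1) : tailF d t p ≤ tailF d t q :=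
  eventProb_mono (monotone_le_sum hd t) hp₀ hpq hq₁

/-- The paper's `pᵢ`, with `s = θᵢ (uᵢ₁ - uᵢ₂)`. -/
noncomputable def contribProb (c₁ c₂ s : ℝ) : ℝ :=
  (c₁ * exp s + c₂) / (1 + exp s)

lemma exp_div_one_add_exp (x : ℝ) : exp x / (1 + exp x) = sigmoid x := by
  rw [sigmoid_def, exp_neg]
  field_simp
  ring

lemma contribProb_nonneg {c₁ c₂ : ℝ} (hc₁ : 0 ≤ c₁) (hc₂ : 0 ≤ c₂) (s : ℝ) :
    0 ≤ contribProb c₁ c₂ s := by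
  unfold contribProb
  positivity

lemma contribProb_one_zero (s : ℝ) : contribProb 1 0 s = sigmoid s := by
  simp [contribProb, exp_div_one_add_exp]

lemma contribProb_zero_one (s : ℝ) : contribProb 0 1 s = sigmoid (-s) := by
  simp [contribProb, sigmoid_def]

lemma contribProb_one_one (s : ℝ) : contribProb 1 1 s = 1 := by
  rw [contribProb, one_mul, add_comm]
  exact div_self (by positivity)

lemma ptilde_one_zero (θ : ℝ) : ptilde 1 0 θ = sigmoid |θ| := by
  simp [ptilde, exp_div_one_add_exp]

lemma ptilde_zero_one (θ : ℝ) : ptilde 0 1 θ = sigmoid |θ| := by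
  simp [ptilde, exp_div_one_add_exp]

lemma ptilde_nonneg (c₁ c₂ θ : ℝ) : 0 ≤ ptilde c₁ c₂ θ := by
  unfold ptilde
  split_ifs <;> positivity

lemma ptilde_le_one (c₁ c₂ θ : ℝ) : ptilde c₁ c₂ θ ≤ 1 := by
  unfold ptilde
  split_ifs
  · exact zero_le_one
  · exact le_rfl
  · exact exp_div_one_add_exp _ ▸ sigmoid_le_one _

lemma pbar_le_one (c₁ c₂ : ℝ) {Γ : ℝ} (hΓ : 0 ≤ Γ) : pbar c₁ c₂ Γ ≤ 1 := by
  unfold pbar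
  split_ifs
  · exact zero_le_one
  · exact le_rfl
  · rw [div_le_one (by positivity)]
    linarith

lemma ptilde_le_pbar (c₁ c₂ : ℝ) {θ Γ : ℝ} (hθΓ : exp |θ| ≤ Γ) :
    ptilde c₁ c₂ θ ≤ pbar c₁ c₂ Γ := by
  have hE := exp_pos |θ|
  unfold ptilde pbar
  split_ifs
  · exact le_rfl
  · exact le_rfl
  · rw [div_le_div_iff₀ (by positivity) (by linarith)]
    linarith

lemma contribProb_le_ptilde {c₁ c₂ s θ : ℝ} (hc₁ : c₁ = 0 ∨ c₁ = 1) (hc₂ : c₂ = 0 ∨ c₂ = 1)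
    (hs : |s| ≤ |θ|) : contribProb c₁ c₂ s ≤ ptilde c₁ c₂ θ := by
  rcases hc₁ with rfl | rfl <;> rcases hc₂ with rfl | rfl
  · simp [contribProb, ptilde]
  · rw [contribProb_zero_one, ptilde_zero_one]
    exact sigmoid_le ((neg_le_abs s).trans hs)
  · rw [contribProb_one_zero, ptilde_one_zero]
    exact sigmoid_le ((le_abs_self s).trans hs)
  · simp [contribProb_one_one, ptilde]

lemma abs_mul_sub_le_abs_s16 (θ : ℝ) {u₁ u₂ : ℝ} (hu₁ : u₁ ∈ Set.Icc (0 : ℝ) 1)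
    (hu₂ : u₂ ∈ Set.Icc (0 : ℝ) 1) : |θ * (u₁ - u₂)| ≤ |θ| := by
  rw [abs_mul]
  refine mul_le_of_le_one_right (abs_nonneg θ) (abs_le.mpr ⟨?_, ?_⟩)
  · linarith [hu₁.1, hu₂.2]
  · linarith [hu₁.2, hu₂.1]

lemma exists_mul_sub_eq_abs (θ : ℝ) :
    ∃ v₁ ∈ Set.Icc (0 : ℝ) 1, ∃ v₂ ∈ Set.Icc (0 : ℝ) 1, θ * (v₁ - v₂) = |θ| := by
  rcases le_total 0 θ with h | h
  · exact ⟨1, by simp, 0, by simp, by simp [abs_of_nonneg h]⟩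
  · exact ⟨0, by simp, 1, by simp, by simp [abs_of_nonpos h]⟩

lemma exists_contribProb_eq_ptilde {c₁ c₂ : ℝ} (θ : ℝ) (hc₁ : c₁ = 0 ∨ c₁ = 1)
    (hc₂ : c₂ = 0 ∨ c₂ = 1) : ∃ v₁ ∈ Set.Icc (0 : ℝ) 1, ∃ v₂ ∈ Set.Icc (0 : ℝ) 1,
      contribProb c₁ c₂ (θ * (v₁ - v₂)) = ptilde c₁ c₂ θ := by
  obtain ⟨v₁, hv₁, v₂, hv₂, hv⟩ := exists_mul_sub_eq_abs θ
  rcases hc₁ with rfl | rfl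
  · refine ⟨v₂, hv₂, v₁, hv₁, ?_⟩
    rw [show θ * (v₂ - v₁) = -|θ| by rw [← hv]; ring]
    rcases hc₂ with rfl | rfl
    · simp [contribProb, ptilde]
    · rw [contribProb_zero_one, neg_neg, ptilde_zero_one]
  · refine ⟨v₁, hv₁, v₂, hv₂, ?_⟩
    rw [hv]
    rcases hc₂ with rfl | rfl
    · rw [contribProb_one_zero, ptilde_one_zero]
    · simp [contribProb_one_one, ptilde]

theorem stmt16_general (n : ℕ) (t : ℝ)
    (c₁ c₂ : Fin n → ℝ) (hc₁ : ∀ i, c₁ i = 0 ∨ c₁ i = 1) (hc₂ : ∀ i, c₂ i = 0 ∨ c₂ i = 1)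
    (d : Fin n → ℝ) (hd : ∀ i, 0 ≤ d i) (θ : Fin n → ℝ)
    (u₁ u₂ : Fin n → ℝ) (hu₁ : ∀ i, u₁ i ∈ Set.Icc (0:ℝ) 1) (hu₂ : ∀ i, u₂ i ∈ Set.Icc (0:ℝ) 1)
    (Γ : ℝ) (hθΓ : ∀ i, Real.exp |θ i| ≤ Γ) :
    tailF d t (fun i => (c₁ i * Real.exp (θ i * (u₁ i - u₂ i)) + c₂ i) /
        (1 + Real.exp (θ i * (u₁ i - u₂ i)))) ≤
      tailF d t (fun i => ptilde (c₁ i) (c₂ i) (θ i)) ∧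
    tailF d t (fun i => ptilde (c₁ i) (c₂ i) (θ i)) ≤
      tailF d t (fun i => pbar (c₁ i) (c₂ i) Γ) ∧
    ∃ v₁ v₂ : Fin n → ℝ, (∀ i, v₁ i ∈ Set.Icc (0:ℝ) 1) ∧ (∀ i, v₂ i ∈ Set.Icc (0:ℝ) 1) ∧
      tailF d t (fun i => (c₁ i * Real.exp (θ i * (v₁ i - v₂ i)) + c₂ i) /
          (1 + Real.exp (θ i * (v₁ i - v₂ i)))) =
        tailF d t (fun i => ptilde (c₁ i) (c₂ i) (θ i)) := by
  have hc₀ (c : ℝ) (hc : c = 0 ∨ c = 1) : 0 ≤ c := by rcases hc with rfl | rfl <;> norm_num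
  choose v₁ hv₁ v₂ hv₂ hv using fun i => exists_contribProb_eq_ptilde (θ i) (hc₁ i) (hc₂ i)
  refine ⟨?_, ?_, v₁, v₂, hv₁, hv₂, congrArg (tailF d t) (funext hv)⟩
  · exact tailF_mono hd t (fun i => contribProb_nonneg (hc₀ _ (hc₁ i)) (hc₀ _ (hc₂ i)) _)
      (fun i => contribProb_le_ptilde (hc₁ i) (hc₂ i) (abs_mul_sub_le_abs_s16 _ (hu₁ i) (hu₂ i)))
      (fun i => ptilde_le_one _ _ _)
  · exact tailF_mono hd t (fun i => ptilde_nonneg _ _ _) (fun i => ptilde_le_pbar _ _ (hθΓ i))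
      (fun i => pbar_le_one _ _ ((exp_pos _).le.trans (hθΓ i)))

/-- Corollary 2 of the paper: `F_{d,t}(p) ≤ F_{d,t}(p̃) ≤ F_{d,t}(p̄)`, and
the bound `F_{d,t}(p̃)` is attained for some choice of unobserved covariates
`u₁, u₂ ∈ [0,1]^n`. -/
theorem stmt16 (n : ℕ) (hn : 1 ≤ n) (t : ℝ)
    (c₁ c₂ : Fin n → ℝ) (hc₁ : ∀ i, c₁ i = 0 ∨ c₁ i = 1) (hc₂ : ∀ i, c₂ i = 0 ∨ c₂ i = 1)
    (d : Fin n → ℝ) (hd : ∀ i, 0 ≤ d i) (θ : Fin n → ℝ)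
    (u₁ u₂ : Fin n → ℝ) (hu₁ : ∀ i, u₁ i ∈ Set.Icc (0:ℝ) 1) (hu₂ : ∀ i, u₂ i ∈ Set.Icc (0:ℝ) 1)
    (Γ : ℝ) (hΓ : 1 < Γ) (hθΓ : ∀ i, Real.exp |θ i| ≤ Γ) :
    tailF d t (fun i => (c₁ i * Real.exp (θ i * (u₁ i - u₂ i)) + c₂ i) /
        (1 + Real.exp (θ i * (u₁ i - u₂ i)))) ≤
      tailF d t (fun i => ptilde (c₁ i) (c₂ i) (θ i)) ∧
    tailF d t (fun i => ptilde (c₁ i) (c₂ i) (θ i)) ≤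
      tailF d t (fun i => pbar (c₁ i) (c₂ i) Γ) ∧
    ∃ v₁ v₂ : Fin n → ℝ, (∀ i, v₁ i ∈ Set.Icc (0:ℝ) 1) ∧ (∀ i, v₂ i ∈ Set.Icc (0:ℝ) 1) ∧
      tailF d t (fun i => (c₁ i * Real.exp (θ i * (v₁ i - v₂ i)) + c₂ i) /
          (1 + Real.exp (θ i * (v₁ i - v₂ i)))) =
        tailF d t (fun i => ptilde (c₁ i) (c₂ i) (θ i)) :=
  stmt16_general n t c₁ c₂ hc₁ hc₂ d hd θ u₁ u₂ hu₁ hu₂ Γ hθΓ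
end
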